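/- arXiv:2405.12626 — 7 statements merged into one kernel-verified Lean document; each statement's English description precedes it below -/
import Mathlib

section
/- Let Z be a Hausdorff topological space with no isolated points and let f_1,…,f_N be continuous self-maps of Z. Then every disjoint return set d-N(U_0; U_1,…,U_N) (over all nonempty open sets U_0,U_1,…,U_N ⊆ Z) is nonempty if and only if every disjoint return set d-N(U_0; U_1,…,U_N) is infinite. -/
/-- Let `Z` be a Hausdorff topological space with no isolated points and
`f 1, …, f N` continuous self-maps of `Z`. Then every disjoint return set
`d-N(U₀; U₁,…,U_N)` is nonempty iff every disjoint return set is infinite. -/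
theorem stmt_0 {Z : Type*} [TopologicalSpace Z] [T2Space Z]
    (hiso : ∀ z : Z, ¬ IsOpen ({z} : Set Z))
    {N : ℕ} (f : Fin N → Z → Z) (hf : ∀ i, Continuous (f i)) :
    (∀ (U0 : Set Z) (U : Fin N → Set Z), IsOpen U0 → U0.Nonempty →
        (∀ i, IsOpen (U i)) → (∀ i, (U i).Nonempty) →
        {m : ℕ | ∃ z ∈ U0, ∀ i, (f i)^[m] z ∈ U i}.Nonempty)
    ↔
    (∀ (U0 : Set Z) (U : Fin N → Set Z), IsOpen U0 → U0.Nonempty →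
        (∀ i, IsOpen (U i)) → (∀ i, (U i).Nonempty) →
        {m : ℕ | ∃ z ∈ U0, ∀ i, (f i)^[m] z ∈ U i}.Infinite) := by
  constructor
  swap
  · intro H U0 U h1 h2 h3 h4
    exact (H U0 U h1 h2 h3 h4).nonempty
  intro H
  rcases isEmpty_or_nonempty (Fin N) with hN | hN
  · intro U0 U h1 h2 h3 h4
    have : {m : ℕ | ∃ z ∈ U0, ∀ i, (f i)^[m] z ∈ U i} = Set.univ := by
      ext m
      obtain ⟨z, hz⟩ := h2
      simp only [Set.mem_setOf_eq, Set.mem_univ, iff_true]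
      exact ⟨z, hz, fun i => isEmptyElim i⟩
    rw [this]
    exact Set.infinite_univ
  · obtain ⟨i0⟩ := hN
    have key : ∀ F : Finset ℕ, ∀ (U0 : Set Z) (U : Fin N → Set Z), IsOpen U0 → U0.Nonempty →
        (∀ i, IsOpen (U i)) → (∀ i, (U i).Nonempty) →
        ∃ m, (∃ z ∈ U0, ∀ i, (f i)^[m] z ∈ U i) ∧ m ∉ F := by
      intro F
      induction F using Finset.induction with
      | empty =>
        intro U0 U h1 h2 h3 h4
        obtain ⟨m, hm⟩ := H U0 U h1 h2 h3 h4
        exact ⟨m, hm, by simp⟩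
      | @insert a F ha IH =>
        intro U0 U h1 h2 h3 h4
        by_cases hcase : ∃ z ∈ U0, ∀ i, (f i)^[a] z ∈ U i
        · obtain ⟨z, hz, hzU⟩ := hcase
          have exy : ∀ i, ∃ y ∈ U i, y ≠ (f i)^[a] z := by
            intro i
            by_contra h
            push_neg at h
            apply hiso ((f i)^[a] z)
            have hU : U i = {(f i)^[a] z} := by
              apply subset_antisymm
              · intro y hy; exact h y hy
              · intro y hy; simp at hy; rw [hy]; exact hzU i
            rw [← hU]
            exact h3 i
          choose y hyU hyne using exy
          have sep : ∀ i, ∃ V W : Set Z, IsOpen V ∧ IsOpen W ∧ (f i)^[a] z ∈ V ∧ y i ∈ W ∧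
              Disjoint V W := by
            intro i
            obtain ⟨V, W, hV, hW, hxV, hyW, hd⟩ := t2_separation (hyne i).symm
            exact ⟨V, W, hV, hW, hxV, hyW, hd⟩
          choose V W hV hW hxV hyW hdis using sep
          have hU0' : IsOpen (U0 ∩ ⋂ i, (f i)^[a] ⁻¹' (U i ∩ V i)) := by
            refine h1.inter (isOpen_iInter_of_finite fun i => ?_)
            exact (((h3 i).inter (hV i)).preimage ((hf i).iterate a))
          have hz0' : z ∈ U0 ∩ ⋂ i, (f i)^[a] ⁻¹' (U i ∩ V i) :=
            ⟨hz, Set.mem_iInter.2 fun i => ⟨hzU i, hxV i⟩⟩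
          obtain ⟨m, ⟨z', hz'0, hz'B⟩, hmF⟩ :=
            IH (U0 ∩ ⋂ i, (f i)^[a] ⁻¹' (U i ∩ V i)) (fun i => U i ∩ W i)
              hU0' ⟨z, hz0'⟩ (fun i => (h3 i).inter (hW i)) (fun i => ⟨y i, hyU i, hyW i⟩)
          refine ⟨m, ⟨z', hz'0.1, fun i => (hz'B i).1⟩, ?_⟩
          rw [Finset.mem_insert]
          rintro (rfl | hF)
          · have hA : (f i0)^[m] z' ∈ V i0 :=
              (Set.mem_iInter.1 hz'0.2 i0).2
            exact (hdis i0).le_bot ⟨hA, (hz'B i0).2⟩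
          · exact hmF hF
        · obtain ⟨m, hm, hmF⟩ := IH U0 U h1 h2 h3 h4
          refine ⟨m, hm, ?_⟩
          rw [Finset.mem_insert]
          rintro (rfl | hF)
          · exact hcase hm
          · exact hmF hF
    intro U0 U h1 h2 h3 h4
    by_contra hfin
    rw [Set.not_infinite] at hfin
    obtain ⟨m, hm, hmF⟩ := key hfin.toFinset U0 U h1 h2 h3 h4
    exact hmF (hfin.mem_toFinset.2 hm)
end

section
/- Let X be a Hausdorff topological vector space over ℝ, let T_1,…,T_N be continuous linear operators on X, let A be a filter of subsets of ℕ, and let Z ⊆ X be a set with 0 ∈ Z, with the linear span of Z dense in X, and with T_i(Z) ⊆ Z for every i = 1,…,N. If the tuple of restrictions T_1|_Z,…,T_N|_Z (Z carrying the subspace topology) is disjoint A-transitive, then the tuple T_1,…,T_N is disjoint A-transitive on X. -/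
/-!
Approximate points of `V0` and of the `V i` by vectors of `span Z` and write all of them as
linear combinations `∑ k, c k • a k` with the same coefficients `c` and with `a k ∈ Z`; this is
possible because `0 ∈ Z` lets us pad each combination with zero vectors. By continuity of
`a ↦ ∑ k, c k • a k`, perturbing each `a k` within a small open set keeps the combinations in
`V0` and the `V i`. Transitivity on `Z`, applied coordinatewise in `k`, gives one return set per
`k`; their intersection lies in `𝒜`, and for `m` in it the linearity of `T i ^ m` assembles the
coordinatewise witnesses into a witness for `m` in `X`.
-/

open Set

universe u

lemma exists_common_coeffs_of_mem_span {R M : Type*} {ι : Type u} [Semiring R] [AddCommMonoid M]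
    [Module R M] [Fintype ι] {Z : Set M} (h0 : (0 : M) ∈ Z) {x : ι → M}
    (hx : ∀ j, x j ∈ Submodule.span R Z) :
    ∃ (K : Type u) (_ : Fintype K) (c : K → R) (a : ι → K → M),
      (∀ j k, a j k ∈ Z) ∧ ∀ j, ∑ k, c k • a j k = x j := by
  classical
  choose n c g hg using fun j => Submodule.mem_span_set'.1 (hx j)
  refine ⟨Σ j, Fin (n j), inferInstance, fun p => c p.1 p.2,
    fun j p => if p.1 = j then g p.1 p.2 else 0, fun j p => ?_, fun j => ?_⟩
  · dsimp only
    split_ifs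
    exacts [(g _ _).2, h0]
  · simp [Fintype.sum_sigma, smul_ite, hg]

lemma exists_isOpen_forall_sum_smul_mem {R M K : Type*} [TopologicalSpace M] [AddCommMonoid M]
    [ContinuousAdd M] [SMul R M] [ContinuousConstSMul R M] [Fintype K] (c : K → R) {a : K → M}
    {U : Set M} (hU : IsOpen U) (ha : ∑ k, c k • a k ∈ U) :
    ∃ W : K → Set M, (∀ k, IsOpen (W k) ∧ a k ∈ W k) ∧
      ∀ w : K → M, (∀ k, w k ∈ W k) → ∑ k, c k • w k ∈ U := by
  have hcont : Continuous fun w : K → M => ∑ k, c k • w k := by fun_prop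
  obtain ⟨W, hW, hWU⟩ := isOpen_pi_iff'.1 (hU.preimage hcont) a ha
  exact ⟨W, hW, fun w hw => hWU fun k _ => hw k⟩

lemma iInter_mem_of_inter_mem {α ι : Type*} [Finite ι] {𝒜 : Set (Set α)} (huniv : univ ∈ 𝒜)
    (hUp : ∀ A B : Set α, A ∈ 𝒜 → A ⊆ B → B ∈ 𝒜)
    (hCap : ∀ A B : Set α, A ∈ 𝒜 → B ∈ 𝒜 → A ∩ B ∈ 𝒜) {S : ι → Set α} (hS : ∀ k, S k ∈ 𝒜) :
    ⋂ k, S k ∈ 𝒜 :=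
  let F : Filter α :=
    { sets := 𝒜, univ_sets := huniv, sets_of_superset := hUp _ _, inter_sets := hCap _ _ }
  Filter.iInter_mem (f := F) |>.2 hS

lemma iterate_sum_smul {R M K : Type*} [Semiring R] [AddCommMonoid M] [Module R M]
    [TopologicalSpace M] [Fintype K] (f : M →L[R] M) (m : ℕ) (c : K → R) (z : K → M) :
    (⇑f)^[m] (∑ k, c k • z k) = ∑ k, c k • (⇑f)^[m] (z k) := by
  rw [← FunLike.coe_pow_eq_iterate]
  simp only [map_sum, map_smul]

theorem stmt_1_general {X : Type*} [AddCommGroup X] [Module ℝ X] [TopologicalSpace X]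
    [IsTopologicalAddGroup X] [ContinuousSMul ℝ X]
    {N : ℕ} (T : Fin N → X →L[ℝ] X)
    (𝒜 : Set (Set ℕ))
    (hUp : ∀ A B : Set ℕ, A ∈ 𝒜 → A ⊆ B → B ∈ 𝒜)
    (hCap : ∀ A B : Set ℕ, A ∈ 𝒜 → B ∈ 𝒜 → A ∩ B ∈ 𝒜)
    (Z : Set X) (h0 : (0 : X) ∈ Z)
    (hdense : Dense (Submodule.span ℝ Z : Set X))
    (hZtrans : ∀ (V0 : Set X) (V : Fin N → Set X), IsOpen V0 → (V0 ∩ Z).Nonempty →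
        (∀ i, IsOpen (V i)) → (∀ i, (V i ∩ Z).Nonempty) →
        {m : ℕ | ∃ z ∈ V0 ∩ Z, ∀ i, (⇑(T i))^[m] z ∈ V i ∩ Z} ∈ 𝒜) :
    ∀ (V0 : Set X) (V : Fin N → Set X), IsOpen V0 → V0.Nonempty →
        (∀ i, IsOpen (V i)) → (∀ i, (V i).Nonempty) →
        {m : ℕ | ∃ z ∈ V0, ∀ i, (⇑(T i))^[m] z ∈ V i} ∈ 𝒜 := by
  intro V0 V hV0 hV0ne hV hVne
  let U : Option (Fin N) → Set X := fun j => j.elim V0 V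
  have hU : ∀ j, IsOpen (U j) ∧ (U j).Nonempty := by
    rintro (_ | i)
    exacts [⟨hV0, hV0ne⟩, ⟨hV i, hVne i⟩]
  choose x hxU hxspan using fun j => hdense.inter_open_nonempty (U j) (hU j).1 (hU j).2
  obtain ⟨K, _, c, a, haZ, hax⟩ := exists_common_coeffs_of_mem_span h0 hxspan
  choose W hW hWU using fun j =>
    exists_isOpen_forall_sum_smul_mem c (hU j).1 ((hax j).symm ▸ hxU j)
  have huniv : univ ∈ 𝒜 := hUp _ _ (hZtrans univ (fun _ => univ) isOpen_univ ⟨0, trivial, h0⟩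
    (fun _ => isOpen_univ) fun _ => ⟨0, trivial, h0⟩) (subset_univ _)
  have hreturn : ∀ k, {m : ℕ | ∃ z ∈ W none k ∩ Z, ∀ i, (⇑(T i))^[m] z ∈ W (some i) k ∩ Z} ∈ 𝒜 :=
    fun k => hZtrans _ _ (hW none k).1 ⟨a none k, (hW none k).2, haZ none k⟩
      (fun i => (hW (some i) k).1) fun i => ⟨a (some i) k, (hW (some i) k).2, haZ (some i) k⟩
  refine hUp _ _ (iInter_mem_of_inter_mem huniv hUp hCap hreturn) fun m hm => ?_
  choose z hz0 hz using mem_iInter.1 hm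
  refine ⟨∑ k, c k • z k, hWU none z fun k => (hz0 k).1, fun i => ?_⟩
  rw [iterate_sum_smul]
  exact hWU (some i) _ fun k => (hz k i).1

/-- Let `X` be a Hausdorff topological vector space over `ℝ`,
`T 1, …, T N` continuous linear operators on `X`, `𝒜` a filter of subsets of `ℕ`
(a Furstenberg family closed under finite intersections), and `Z ⊆ X` a set with
`0 ∈ Z`, linearly dense in `X`, and invariant under each `T i`.  If the tuple of
restrictions `T i |_Z` (with the subspace topology on `Z`, whose nonempty open sets
are exactly the sets `V ∩ Z` with `V` open in `X` and `V ∩ Z ≠ ∅`) is disjoint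
`𝒜`-transitive, then the tuple `T 1, …, T N` is disjoint `𝒜`-transitive on `X`. -/
theorem stmt_1 {X : Type*} [AddCommGroup X] [Module ℝ X] [TopologicalSpace X]
    [IsTopologicalAddGroup X] [ContinuousSMul ℝ X] [T2Space X]
    {N : ℕ} (T : Fin N → X →L[ℝ] X)
    (𝒜 : Set (Set ℕ))
    (hInf : ∀ A ∈ 𝒜, A.Infinite)
    (hUp : ∀ A B : Set ℕ, A ∈ 𝒜 → A ⊆ B → B ∈ 𝒜)
    (hCap : ∀ A B : Set ℕ, A ∈ 𝒜 → B ∈ 𝒜 → A ∩ B ∈ 𝒜)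
    (Z : Set X) (h0 : (0 : X) ∈ Z)
    (hdense : Dense (Submodule.span ℝ Z : Set X))
    (hinv : ∀ i, Set.MapsTo (T i) Z Z)
    (hZtrans : ∀ (V0 : Set X) (V : Fin N → Set X), IsOpen V0 → (V0 ∩ Z).Nonempty →
        (∀ i, IsOpen (V i)) → (∀ i, (V i ∩ Z).Nonempty) →
        {m : ℕ | ∃ z ∈ V0 ∩ Z, ∀ i, (⇑(T i))^[m] z ∈ V i ∩ Z} ∈ 𝒜) :
    ∀ (V0 : Set X) (V : Fin N → Set X), IsOpen V0 → V0.Nonempty →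
        (∀ i, IsOpen (V i)) → (∀ i, (V i).Nonempty) →
        {m : ℕ | ∃ z ∈ V0, ∀ i, (⇑(T i))^[m] z ∈ V i} ∈ 𝒜 :=
  stmt_1_general T 𝒜 hUp hCap Z h0 hdense hZtrans
end

section
/- Let f_1,…,f_N be continuous self-maps of a topological space Z. Then the following are equivalent: (i) f_1,…,f_N are disjoint weakly mixing; (ii) for all nonempty open sets U_0,U_1,…,U_N ⊆ Z and V_0,V_1,…,V_N ⊆ Z, the intersection d-N(U_0; U_1,…,U_N) ∩ d-N(V_0; V_1,…,V_N) is nonempty. Moreover, if Z is Hausdorff and has no isolated points, these are also equivalent to: (iii) for all such open sets, the intersection d-N(U_0; U_1,…,U_N) ∩ d-N(V_0; V_1,…,V_N) is infinite. -/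
/-- The disjoint return set `d-N(U₀; U₁,…,U_N)` of the tuple `f`. -/
def dRet {Z : Type*} {N : ℕ} (f : Fin N → Z → Z) (U0 : Set Z) (U : Fin N → Set Z) :
    Set ℕ :=
  {m | ∃ z ∈ U0, ∀ i, (f i)^[m] z ∈ U i}

/-- The tuple `f 1,…,f N` is disjoint transitive: every disjoint return set is nonempty. -/
def dTrans {Z : Type*} [TopologicalSpace Z] {N : ℕ} (f : Fin N → Z → Z) : Prop :=
  ∀ (U0 : Set Z) (U : Fin N → Set Z), IsOpen U0 → U0.Nonempty →
    (∀ i, IsOpen (U i)) → (∀ i, (U i).Nonempty) → (dRet f U0 U).Nonempty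

/-- The `r`-fold product map `g × ⋯ × g` on `Z^r`. -/
def prodPow {Z : Type*} (r : ℕ) (g : Z → Z) : (Fin r → Z) → (Fin r → Z) :=
  fun x j => g (x j)

/-- The tuple `f 1,…,f N` is disjoint weakly mixing of order `r`: the `N`-tuple of the
`r`-fold products `f i × ⋯ × f i` on `Z^r` is disjoint transitive. -/
def dWM {Z : Type*} [TopologicalSpace Z] {N : ℕ} (r : ℕ) (f : Fin N → Z → Z) : Prop :=
  dTrans (fun i => prodPow r (f i))

/-!
Boxes `U₀ × V₀` form a basis of `Z²`, and under the product maps the box `U₀ × V₀` meets the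
targets `Uᵢ × Vᵢ` at time `m` exactly when `m ∈ d-N(U₀; U) ∩ d-N(V₀; V)`; this gives (i) ⇔ (ii).
For (iii): if `m` is a common return time, the sets `(f i)^[m] ⁻¹' U i` are again nonempty open
targets, and a common return time `k` for the pulled-back targets yields the common return time
`m + k`. To make `k` positive, shrink `U₀` and one `U i₀` to disjoint open sets, which is possible
in a Hausdorff space without isolated points; this excludes the return time `0`.
-/

section

open Set Function

lemma Set.infinite_of_forall_mem_exists_gt {α : Type*} [Preorder α] {s : Set α}
    (hne : s.Nonempty) (h : ∀ a ∈ s, ∃ b ∈ s, a < b) : s.Infinite := by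
  intro hfin
  obtain ⟨a, ha, hmax⟩ := hfin.exists_maximal hne
  obtain ⟨b, hb, hab⟩ := h a ha
  exact (hab.trans_le (hmax hb hab.le)).false

lemma exists_univ_pi_subset_of_isOpen {ι : Type*} [Finite ι] {X : ι → Type*}
    [∀ i, TopologicalSpace (X i)] {W : Set (∀ i, X i)} (hW : IsOpen W) (hne : W.Nonempty) :
    ∃ u : ∀ i, Set (X i), (∀ i, IsOpen (u i)) ∧ (∀ i, (u i).Nonempty) ∧ univ.pi u ⊆ W := by
  obtain ⟨x, hx⟩ := hne
  obtain ⟨u, hu, hsub⟩ := isOpen_pi_iff'.mp hW x hx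
  exact ⟨u, fun i => (hu i).1, fun i => ⟨x i, (hu i).2⟩, hsub⟩

variable {Z : Type*} {N : ℕ} {f : Fin N → Z → Z}

lemma prodPow_iterate {r : ℕ} (g : Z → Z) (m : ℕ) (x : Fin r → Z) :
    (prodPow r g)^[m] x = fun j => g^[m] (x j) := by
  induction m generalizing x with
  | zero => rfl
  | succ n ih =>
    rw [iterate_succ_apply, ih]
    rfl

lemma dRet_mono {U0 U0' : Set Z} {U U' : Fin N → Set Z} (h0 : U0' ⊆ U0)
    (h : ∀ i, U' i ⊆ U i) : dRet f U0' U' ⊆ dRet f U0 U := by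
  rintro m ⟨z, hz, hzi⟩
  exact ⟨z, h0 hz, fun i => h i (hzi i)⟩

lemma dRet_iterate_preimage (U0 : Set Z) (U : Fin N → Set Z) (m : ℕ) :
    dRet f U0 (fun i => (f i)^[m] ⁻¹' U i) = (m + ·) ⁻¹' dRet f U0 U := by
  ext k
  simp only [dRet, mem_preimage, mem_ofPred_eq, iterate_add_apply]

lemma iterate_preimage_nonempty_of_mem_dRet {U0 : Set Z} {U : Fin N → Set Z} {m : ℕ}
    (hm : m ∈ dRet f U0 U) (i : Fin N) : ((f i)^[m] ⁻¹' U i).Nonempty := by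
  obtain ⟨z, -, hz⟩ := hm
  exact ⟨z, hz i⟩

lemma zero_notMem_dRet {U0 : Set Z} {U : Fin N → Set Z} {i : Fin N}
    (h : Disjoint U0 (U i)) : 0 ∉ dRet f U0 U := by
  rintro ⟨z, hz, hzi⟩
  exact h.notMem_of_mem_left hz (hzi i)

lemma one_mem_dRet_of_isEmpty [IsEmpty (Fin N)] {U0 : Set Z} (hU0 : U0.Nonempty)
    (U : Fin N → Set Z) : 1 ∈ dRet f U0 U := by
  obtain ⟨z, hz⟩ := hU0
  exact ⟨z, hz, isEmptyElim⟩

lemma dRet_prodPow_univ_pi {r : ℕ} (u0 : Fin r → Set Z) (u : Fin N → Fin r → Set Z) :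
    dRet (fun i => prodPow r (f i)) (univ.pi u0) (fun i => univ.pi (u i)) =
      ⋂ j, dRet f (u0 j) (fun i => u i j) := by
  ext m
  simp only [dRet, prodPow_iterate, mem_univ_pi, mem_iInter]
  constructor
  · rintro ⟨x, hx, hxi⟩ j
    exact ⟨x j, hx j, fun i => hxi i j⟩
  · intro h
    choose x hx hxi using h
    exact ⟨x, hx, fun i j => hxi j i⟩

variable [TopologicalSpace Z]

lemma exists_disjoint_open_subsets [T2Space Z]
    (hni : ∀ z : Z, ¬ IsOpen ({z} : Set Z)) {A B : Set Z} (hA : IsOpen A) (hAne : A.Nonempty)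
    (hB : IsOpen B) (hBne : B.Nonempty) :
    ∃ A' ⊆ A, ∃ B' ⊆ B, IsOpen A' ∧ A'.Nonempty ∧ IsOpen B' ∧ B'.Nonempty ∧ Disjoint A' B' := by
  obtain ⟨b, hb⟩ := hBne
  obtain ⟨a, ha, hab⟩ : ∃ a ∈ A, a ≠ b := by
    by_contra! hA_sub
    exact hni b ((hAne.subset_singleton_iff.mp hA_sub) ▸ hA)
  obtain ⟨Oa, Ob, hOa, hOb, haOa, hbOb, hdisj⟩ := t2_separation hab
  exact ⟨A ∩ Oa, inter_subset_left, B ∩ Ob, inter_subset_left, hA.inter hOa, ⟨a, ha, haOa⟩,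
    hB.inter hOb, ⟨b, hb, hbOb⟩, hdisj.mono inter_subset_right inter_subset_right⟩

lemma dWM_iff (r : ℕ) :
    dWM r f ↔ ∀ (u0 : Fin r → Set Z) (u : Fin N → Fin r → Set Z),
      (∀ j, IsOpen (u0 j)) → (∀ j, (u0 j).Nonempty) →
      (∀ i j, IsOpen (u i j)) → (∀ i j, (u i j).Nonempty) →
      (⋂ j, dRet f (u0 j) (fun i => u i j)).Nonempty := by
  constructor
  · intro h u0 u hu0 hu0ne hu hune
    rw [← dRet_prodPow_univ_pi]
    exact h _ _ (isOpen_set_pi finite_univ fun j _ => hu0 j) (univ_pi_nonempty_iff.2 hu0ne)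
      (fun i => isOpen_set_pi finite_univ fun j _ => hu i j)
      (fun i => univ_pi_nonempty_iff.2 (hune i))
  · intro h W0 W hW0 hW0ne hW hWne
    obtain ⟨u0, hu0, hu0ne, hu0W⟩ := exists_univ_pi_subset_of_isOpen hW0 hW0ne
    choose u hu hune huW using fun i => exists_univ_pi_subset_of_isOpen (hW i) (hWne i)
    refine (h u0 u hu0 hu0ne hu hune).mono ?_
    rw [← dRet_prodPow_univ_pi]
    exact dRet_mono hu0W huW

variable (f) in
def ForallDRetPair (P : Set ℕ → Prop) : Prop :=
  ∀ (U0 V0 : Set Z) (U V : Fin N → Set Z),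
    IsOpen U0 → U0.Nonempty → IsOpen V0 → V0.Nonempty →
    (∀ i, IsOpen (U i)) → (∀ i, (U i).Nonempty) →
    (∀ i, IsOpen (V i)) → (∀ i, (V i).Nonempty) →
    P (dRet f U0 U ∩ dRet f V0 V)

lemma ForallDRetPair.mono {P Q : Set ℕ → Prop} (h : ForallDRetPair f P)
    (hPQ : ∀ s, P s → Q s) : ForallDRetPair f Q :=
  fun U0 V0 U V hU0 hU0ne hV0 hV0ne hU hUne hV hVne =>
    hPQ _ (h U0 V0 U V hU0 hU0ne hV0 hV0ne hU hUne hV hVne)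

lemma dWM_two_iff : dWM 2 f ↔ ForallDRetPair f Set.Nonempty := by
  have inter_two (u0 : Fin 2 → Set Z) (u : Fin N → Fin 2 → Set Z) :
      ⋂ j, dRet f (u0 j) (fun i => u i j) =
        dRet f (u0 0) (fun i => u i 0) ∩ dRet f (u0 1) (fun i => u i 1) := by
    ext m
    simp only [mem_iInter, mem_inter_iff, Fin.forall_fin_two]
  simp only [dWM_iff, inter_two, Fin.forall_fin_two]
  constructor
  · intro h U0 V0 U V hU0 hU0ne hV0 hV0ne hU hUne hV hVne
    exact h ![U0, V0] (fun i => ![U i, V i]) ⟨hU0, hV0⟩ ⟨hU0ne, hV0ne⟩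
      (fun i => ⟨hU i, hV i⟩) (fun i => ⟨hUne i, hVne i⟩)
  · intro h u0 u hu0 hu0ne hu hune
    exact h _ _ _ _ hu0.1 hu0ne.1 hu0.2 hu0ne.2 (fun i => (hu i).1) (fun i => (hune i).1)
      (fun i => (hu i).2) (fun i => (hune i).2)

lemma ForallDRetPair.exists_pos_mem [T2Space Z] (hni : ∀ z : Z, ¬ IsOpen ({z} : Set Z))
    (h : ForallDRetPair f Set.Nonempty) {U0 V0 : Set Z} {U V : Fin N → Set Z}
    (hU0 : IsOpen U0) (hU0ne : U0.Nonempty) (hV0 : IsOpen V0) (hV0ne : V0.Nonempty)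
    (hU : ∀ i, IsOpen (U i)) (hUne : ∀ i, (U i).Nonempty)
    (hV : ∀ i, IsOpen (V i)) (hVne : ∀ i, (V i).Nonempty) :
    ∃ m, 0 < m ∧ m ∈ dRet f U0 U ∩ dRet f V0 V := by
  rcases isEmpty_or_nonempty (Fin N) with hN | ⟨⟨i0⟩⟩
  · exact ⟨1, one_pos, one_mem_dRet_of_isEmpty hU0ne U, one_mem_dRet_of_isEmpty hV0ne V⟩
  obtain ⟨A, hAU0, B, hBU, hA, hAne, hB, hBne, hAB⟩ :=
    exists_disjoint_open_subsets hni hU0 hU0ne (hU i0) (hUne i0)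
  set U' := update U i0 B
  have hU'U : ∀ i, U' i ⊆ U i := by
    intro i
    rcases eq_or_ne i i0 with rfl | hi
    · simpa [U'] using hBU
    · simp [U', hi]
  have hU' : ∀ i, IsOpen (U' i) ∧ (U' i).Nonempty := by
    intro i
    rcases eq_or_ne i i0 with rfl | hi
    · simpa [U'] using ⟨hB, hBne⟩
    · simpa [U', hi] using ⟨hU i, hUne i⟩
  obtain ⟨m, hmU, hmV⟩ := h A V0 U' V hA hAne hV0 hV0ne (fun i => (hU' i).1)
    (fun i => (hU' i).2) hV hVne
  have hm0 : m ≠ 0 := by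
    rintro rfl
    exact zero_notMem_dRet (i := i0) (by simpa [U'] using hAB) hmU
  exact ⟨m, Nat.pos_of_ne_zero hm0, dRet_mono hAU0 hU'U hmU, hmV⟩

lemma ForallDRetPair.infinite (hf : ∀ i, Continuous (f i)) [T2Space Z]
    (hni : ∀ z : Z, ¬ IsOpen ({z} : Set Z)) (h : ForallDRetPair f Set.Nonempty) :
    ForallDRetPair f Set.Infinite := by
  intro U0 V0 U V hU0 hU0ne hV0 hV0ne hU hUne hV hVne
  refine infinite_of_forall_mem_exists_gt (h U0 V0 U V hU0 hU0ne hV0 hV0ne hU hUne hV hVne) ?_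
  rintro m ⟨hmU, hmV⟩
  obtain ⟨k, hk, hkU, hkV⟩ := h.exists_pos_mem hni hU0 hU0ne hV0 hV0ne
    (fun i => (hU i).preimage ((hf i).iterate m)) (iterate_preimage_nonempty_of_mem_dRet hmU)
    (fun i => (hV i).preimage ((hf i).iterate m)) (iterate_preimage_nonempty_of_mem_dRet hmV)
  rw [dRet_iterate_preimage] at hkU hkV
  exact ⟨m + k, ⟨hkU, hkV⟩, Nat.lt_add_of_pos_right hk⟩

end

/-- `f 1,…,f N` are disjoint weakly mixing (= of order 2) iff any two
disjoint return sets intersect; if moreover `Z` is Hausdorff with no isolated points,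
this is also equivalent to any two disjoint return sets having infinite intersection. -/
theorem stmt_3 {Z : Type*} [TopologicalSpace Z] {N : ℕ}
    (f : Fin N → Z → Z) (hf : ∀ i, Continuous (f i)) :
    (dWM 2 f ↔
      ∀ (U0 V0 : Set Z) (U V : Fin N → Set Z),
        IsOpen U0 → U0.Nonempty → IsOpen V0 → V0.Nonempty →
        (∀ i, IsOpen (U i)) → (∀ i, (U i).Nonempty) →
        (∀ i, IsOpen (V i)) → (∀ i, (V i).Nonempty) →
        (dRet f U0 U ∩ dRet f V0 V).Nonempty)
    ∧ (T2Space Z → (∀ z : Z, ¬ IsOpen ({z} : Set Z)) →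
      (dWM 2 f ↔
        ∀ (U0 V0 : Set Z) (U V : Fin N → Set Z),
          IsOpen U0 → U0.Nonempty → IsOpen V0 → V0.Nonempty →
          (∀ i, IsOpen (U i)) → (∀ i, (U i).Nonempty) →
          (∀ i, IsOpen (V i)) → (∀ i, (V i).Nonempty) →
          (dRet f U0 U ∩ dRet f V0 V).Infinite)) := by
  refine ⟨dWM_two_iff, fun _ hni => ?_⟩
  rw [dWM_two_iff]
  exact ⟨fun h => h.infinite hf hni, fun h => ForallDRetPair.mono h fun _ => Set.Infinite.nonempty⟩
end

section
/- Let Z be a Hausdorff topological space with no isolated points, let A be a Furstenberg family, let f_1,…,f_N be continuous self-maps of Z that are disjoint A-transitive, and suppose there exists a weakly mixing continuous map g : Z → Z with g ∘ f_i = f_i ∘ g for i = 1,…,N. Then for every r ∈ ℕ, the N-tuple of r-fold product maps f_1×…×f_1, …, f_N×…×f_N acting on Z^r is disjoint A-transitive. In particular, f_1,…,f_N are disjoint weakly mixing of every order. -/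
/-- `g` is weakly mixing: `g × g` is topologically transitive on `Z × Z`. -/
def wMix {Z : Type*} [TopologicalSpace Z] (g : Z → Z) : Prop :=
  ∀ W1 W2 : Set (Z × Z), IsOpen W1 → W1.Nonempty → IsOpen W2 → W2.Nonempty →
    ∃ n : ℕ, ((Prod.map g g)^[n] '' W1 ∩ W2).Nonempty

/-- The tuple `f 1,…,f N` is disjoint `𝒜`-transitive: every disjoint return set
belongs to `𝒜`. -/
def dATrans {Z : Type*} [TopologicalSpace Z] {N : ℕ} (𝒜 : Set (Set ℕ))
    (f : Fin N → Z → Z) : Prop :=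
  ∀ (U0 : Set Z) (U : Fin N → Set Z), IsOpen U0 → U0.Nonempty →
    (∀ i, IsOpen (U i)) → (∀ i, (U i).Nonempty) → dRet f U0 U ∈ 𝒜


/-!
Write `φₙ z = (g^[n₀] z, …, g^[n_{r-1}] z)`. Since `g` commutes with every `fᵢ`, `φₙ`
intertwines `fᵢ` with the product map `fᵢ × ⋯ × fᵢ`, so every disjoint return set of the
`fᵢ` for the sets `φₙ⁻¹ U₀, φₙ⁻¹ Uᵢ` is contained in the corresponding return set of the
product maps for `U₀, Uᵢ`; the family `𝒜` being hereditary upwards, it suffices that all these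
preimages are nonempty for a suitable `n`. That follows from Furstenberg's intersection lemma:
for weakly mixing `g`, any finitely many hitting-time sets `N(U, V)` of nonempty open sets have
a common element, which lets one choose `n₀, …, n_{r-1}` one coordinate at a time.
-/

open Set

section Orbits

variable {Z : Type*}

def hitTimes (g : Z → Z) (U V : Set Z) : Set ℕ :=
  {n | ∃ x ∈ U, g^[n] x ∈ V}

def orbitTuple {r : ℕ} (g : Z → Z) (n : Fin r → ℕ) (z : Z) : Fin r → Z :=
  fun j => g^[n j] z

theorem Function.Commute.semiconj_orbitTuple {f g : Z → Z} (h : Function.Commute g f) {r : ℕ}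
    (n : Fin r → ℕ) : Function.Semiconj (orbitTuple g n) f (prodPow r f) :=
  fun z => funext fun j => (h.iterate_left (n j)) z

theorem dRet_preimage_subset {Y : Type*} {N : ℕ} {f : Fin N → Z → Z} {F : Fin N → Y → Y}
    {φ : Z → Y} (h : ∀ i, Function.Semiconj φ (f i) (F i)) (U0 : Set Y) (U : Fin N → Set Y) :
    dRet f (φ ⁻¹' U0) (fun i => φ ⁻¹' U i) ⊆ dRet F U0 U :=
  fun m ⟨z, hz, hzU⟩ => ⟨φ z, hz, fun i => (h i).iterate_right m z ▸ hzU i⟩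

end Orbits

section WeakMixing

variable {Z : Type*} [TopologicalSpace Z] {g : Z → Z}

theorem wMix.exists_mem_hitTimes_and (hgwm : wMix g) {U U' V V' : Set Z}
    (hU : IsOpen U) (hU₀ : U.Nonempty) (hU' : IsOpen U') (hU'₀ : U'.Nonempty)
    (hV : IsOpen V) (hV₀ : V.Nonempty) (hV' : IsOpen V') (hV'₀ : V'.Nonempty) :
    ∃ n, n ∈ hitTimes g U U' ∧ n ∈ hitTimes g V V' := by
  obtain ⟨n, _, ⟨q, hq, rfl⟩, hqn⟩ :=
    hgwm (U ×ˢ V) (U' ×ˢ V') (hU.prod hV) (hU₀.prod hV₀) (hU'.prod hV') (hU'₀.prod hV'₀)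
  rw [Prod.map_iterate] at hqn
  exact ⟨n, ⟨q.1, hq.1, hqn.1⟩, ⟨q.2, hq.2, hqn.2⟩⟩

theorem wMix.exists_hitTimes_subset_inter (hg : Continuous g) (hgwm : wMix g)
    {U V U' V' : Set Z}
    (hU : IsOpen U) (hU₀ : U.Nonempty) (hV : IsOpen V) (hV₀ : V.Nonempty)
    (hU' : IsOpen U') (hU'₀ : U'.Nonempty) (hV' : IsOpen V') (hV'₀ : V'.Nonempty) :
    ∃ W W' : Set Z, IsOpen W ∧ W.Nonempty ∧ IsOpen W' ∧ W'.Nonempty ∧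
      hitTimes g W W' ⊆ hitTimes g U V ∩ hitTimes g U' V' := by
  obtain ⟨n, ⟨x, hxU, hxU'⟩, ⟨y, hyV, hyV'⟩⟩ :=
    hgwm.exists_mem_hitTimes_and hU hU₀ hU' hU'₀ hV hV₀ hV' hV'₀
  refine ⟨U ∩ g^[n] ⁻¹' U', V ∩ g^[n] ⁻¹' V', hU.inter (hU'.preimage (hg.iterate n)),
    ⟨x, hxU, hxU'⟩, hV.inter (hV'.preimage (hg.iterate n)), ⟨y, hyV, hyV'⟩, ?_⟩
  rintro m ⟨z, ⟨hzU, hzU'⟩, hzV, hzV'⟩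
  refine ⟨⟨z, hzU, hzV⟩, g^[n] z, hzU', ?_⟩
  rwa [mem_preimage, ← Function.Commute.iterate_iterate_self g m n z] at hzV'

theorem wMix.exists_hitTimes_subset_biInter [Nonempty Z] (hg : Continuous g) (hgwm : wMix g)
    {ι : Type*} (s : Finset ι) (U V : ι → Set Z) (hU : ∀ k, IsOpen (U k))
    (hU₀ : ∀ k, (U k).Nonempty) (hV : ∀ k, IsOpen (V k)) (hV₀ : ∀ k, (V k).Nonempty) :
    ∃ W W' : Set Z, IsOpen W ∧ W.Nonempty ∧ IsOpen W' ∧ W'.Nonempty ∧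
      hitTimes g W W' ⊆ ⋂ k ∈ s, hitTimes g (U k) (V k) := by
  classical
  induction s using Finset.induction_on with
  | empty => exact ⟨univ, univ, isOpen_univ, univ_nonempty, isOpen_univ, univ_nonempty, by simp⟩
  | insert a s _ ih =>
    obtain ⟨W, W', hW, hW₀, hW', hW'₀, hsub⟩ := ih
    obtain ⟨X, X', hX, hX₀, hX', hX'₀, hXsub⟩ :=
      hgwm.exists_hitTimes_subset_inter hg (hU a) (hU₀ a) (hV a) (hV₀ a) hW hW₀ hW' hW'₀
    refine ⟨X, X', hX, hX₀, hX', hX'₀, fun m hm => ?_⟩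
    rw [Finset.set_biInter_insert]
    exact ⟨(hXsub hm).1, hsub (hXsub hm).2⟩

theorem wMix.exists_forall_mem_hitTimes [Nonempty Z] (hg : Continuous g) (hgwm : wMix g)
    {ι : Type*} [Finite ι] (U V : ι → Set Z) (hU : ∀ k, IsOpen (U k))
    (hU₀ : ∀ k, (U k).Nonempty) (hV : ∀ k, IsOpen (V k)) (hV₀ : ∀ k, (V k).Nonempty) :
    ∃ n, ∀ k, n ∈ hitTimes g (U k) (V k) := by
  cases nonempty_fintype ι
  obtain ⟨W, W', hW, hW₀, hW', hW'₀, hsub⟩ :=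
    hgwm.exists_hitTimes_subset_biInter hg Finset.univ U V hU hU₀ hV hV₀
  obtain ⟨n, hn, -⟩ := hgwm.exists_mem_hitTimes_and hW hW₀ hW' hW'₀ hW hW₀ hW' hW'₀
  exact ⟨n, fun k => mem_iInter₂.1 (hsub hn) k (Finset.mem_univ k)⟩

theorem wMix.exists_forall_exists_iterate_mem [Nonempty Z] (hg : Continuous g)
    (hgwm : wMix g) {ι : Type*} [Finite ι] :
    ∀ {r : ℕ} (T : ι → Fin r → Set Z), (∀ k j, IsOpen (T k j)) → (∀ k j, (T k j).Nonempty) →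
      ∃ n : Fin r → ℕ, ∀ k, ∃ z, ∀ j, g^[n j] z ∈ T k j
  | 0, _, _, _ => ⟨Fin.elim0, fun _ => ⟨Classical.arbitrary Z, fun j => j.elim0⟩⟩
  | r + 1, T, hT, hT₀ => by
    obtain ⟨n, hn⟩ := hgwm.exists_forall_exists_iterate_mem hg (fun k j => T k j.succ)
      (fun k j => hT k j.succ) (fun k j => hT₀ k j.succ)
    let V : ι → Set Z := fun k => ⋂ j, g^[n j] ⁻¹' T k j.succ
    have hV : ∀ k, IsOpen (V k) := fun k =>
      isOpen_iInter_of_finite fun j => (hT k j.succ).preimage (hg.iterate _)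
    have hV₀ : ∀ k, (V k).Nonempty := fun k =>
      let ⟨z, hz⟩ := hn k
      ⟨z, mem_iInter.2 hz⟩
    obtain ⟨n₀, hn₀⟩ := hgwm.exists_forall_mem_hitTimes hg V (fun k => T k 0) hV hV₀
      (fun k => hT k 0) (fun k => hT₀ k 0)
    refine ⟨Fin.cons n₀ n, fun k => ?_⟩
    obtain ⟨z, hzV, hz₀⟩ := hn₀ k
    exact ⟨z, Fin.cases hz₀ (mem_iInter.1 hzV)⟩

theorem continuous_orbitTuple (hg : Continuous g) {r : ℕ} (n : Fin r → ℕ) :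
    Continuous (orbitTuple g n) :=
  continuous_pi fun j => hg.iterate (n j)

theorem wMix.exists_forall_orbitTuple_preimage_nonempty [Nonempty Z] (hg : Continuous g)
    (hgwm : wMix g) {ι : Type*} [Finite ι] {r : ℕ} (W : ι → Set (Fin r → Z))
    (hW : ∀ k, IsOpen (W k)) (hW₀ : ∀ k, (W k).Nonempty) :
    ∃ n : Fin r → ℕ, ∀ k, (orbitTuple g n ⁻¹' W k).Nonempty := by
  have hbox : ∀ k, ∃ T : Fin r → Set Z,
      (∀ j, IsOpen (T j) ∧ (T j).Nonempty) ∧ univ.pi T ⊆ W k := by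
    intro k
    obtain ⟨x, hx⟩ := hW₀ k
    obtain ⟨T, hT, hTW⟩ := isOpen_pi_iff'.1 (hW k) x hx
    exact ⟨T, fun j => ⟨(hT j).1, x j, (hT j).2⟩, hTW⟩
  choose T hT hTW using hbox
  obtain ⟨n, hn⟩ := hgwm.exists_forall_exists_iterate_mem hg T (fun k j => (hT k j).1)
    (fun k j => (hT k j).2)
  exact ⟨n, fun k => let ⟨z, hz⟩ := hn k; ⟨z, hTW k fun j _ => hz j⟩⟩

end WeakMixing

section DisjointTransitivity

variable {Z : Type*} [TopologicalSpace Z] {N : ℕ} {f : Fin N → Z → Z} {𝒜 : Set (Set ℕ)}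

theorem dATrans.dTrans (hInf : ∀ A ∈ 𝒜, A.Infinite) (hA : dATrans 𝒜 f) : dTrans f :=
  fun U0 U hU0 hU0₀ hU hU₀ => (hInf _ (hA U0 U hU0 hU0₀ hU hU₀)).nonempty

theorem dATrans.prodPow [Nonempty Z] (hUp : ∀ A B : Set ℕ, A ∈ 𝒜 → A ⊆ B → B ∈ 𝒜)
    (hA : dATrans 𝒜 f) {g : Z → Z} (hg : Continuous g) (hgwm : wMix g)
    (hcomm : ∀ i, Function.Commute g (f i)) (r : ℕ) :
    dATrans 𝒜 (fun i => prodPow r (f i)) := by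
  intro U0 U hU0 hU0₀ hU hU₀
  obtain ⟨n, hn⟩ := hgwm.exists_forall_orbitTuple_preimage_nonempty hg
    (fun k : Option (Fin N) => k.elim U0 U)
    (fun k => k.rec hU0 hU) (fun k => k.rec hU0₀ hU₀)
  have hφ := continuous_orbitTuple hg n
  exact hUp _ _ (hA _ _ (hU0.preimage hφ) (hn none) (fun i => (hU i).preimage hφ)
    (fun i => hn (some i))) (dRet_preimage_subset (fun i => (hcomm i).semiconj_orbitTuple n) U0 U)

end DisjointTransitivity

theorem stmt_7_general {Z : Type*} [TopologicalSpace Z]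
    (𝒜 : Set (Set ℕ))
    (hInf : ∀ A ∈ 𝒜, A.Infinite)
    (hUp : ∀ A B : Set ℕ, A ∈ 𝒜 → A ⊆ B → B ∈ 𝒜)
    {N : ℕ} (f : Fin N → Z → Z)
    (hA : dATrans 𝒜 f)
    (g : Z → Z) (hg : Continuous g) (hgwm : wMix g)
    (hcomm : ∀ i, g ∘ f i = f i ∘ g) :
    ∀ r : ℕ, 1 ≤ r → dATrans 𝒜 (fun i => prodPow r (f i)) ∧ dWM r f := by
  intro r hr
  have hAr : dATrans 𝒜 (fun i => prodPow r (f i)) := by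
    intro U0 U hU0 hU0₀
    have : Nonempty Z := ⟨hU0₀.some ⟨0, hr⟩⟩
    exact hA.prodPow hUp hg hgwm (fun i => congrFun (hcomm i)) r U0 U hU0 hU0₀
  exact ⟨hAr, hAr.dTrans hInf⟩

/-- Let `Z` be Hausdorff with no isolated points, `𝒜` a Furstenberg
family, and `f 1,…,f N` continuous, disjoint `𝒜`-transitive self-maps commuting with a
weakly mixing continuous map `g`.  Then for every `r`, the `N`-tuple of `r`-fold
product maps on `Z^r` is disjoint `𝒜`-transitive; in particular `f 1,…,f N` are
disjoint weakly mixing of every order. -/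
theorem stmt_7 {Z : Type*} [TopologicalSpace Z] [T2Space Z]
    (hiso : ∀ z : Z, ¬ IsOpen ({z} : Set Z))
    (𝒜 : Set (Set ℕ))
    (hInf : ∀ A ∈ 𝒜, A.Infinite)
    (hUp : ∀ A B : Set ℕ, A ∈ 𝒜 → A ⊆ B → B ∈ 𝒜)
    {N : ℕ} (f : Fin N → Z → Z) (hf : ∀ i, Continuous (f i))
    (hA : dATrans 𝒜 f)
    (g : Z → Z) (hg : Continuous g) (hgwm : wMix g)
    (hcomm : ∀ i, g ∘ f i = f i ∘ g) :
    ∀ r : ℕ, 1 ≤ r → dATrans 𝒜 (fun i => prodPow r (f i)) ∧ dWM r f :=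
  stmt_7_general 𝒜 hInf hUp f hA g hg hgwm hcomm
end

section
/- Let C be the ternary Cantor set and σ : C → C the backward shift, σ(t) = 3t if t ≤ 1/3 and σ(t) = 3t − 2 if t ≥ 2/3. Then for any pairwise distinct positive integers m_1,…,m_N, the maps σ^{m_1},…,σ^{m_N} are disjoint mixing on C: for all nonempty relatively open sets U_0,U_1,…,U_N ⊆ C, the set { m ∈ ℕ : U_0 ∩ (σ^{m_1})⁻ᵐ(U_1) ∩ … ∩ (σ^{m_N})⁻ᵐ(U_N) ≠ ∅ } is cofinite in ℕ. -/
/-!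
Coding a point of the Cantor set by its ternary digits in `{0, 2}` conjugates `σ` to the left
shift on `ℕ → Bool`, so it suffices to prove disjoint mixing for powers of the shift, and a
continuous surjection transfers disjoint mixing to the factor. Nonempty open sets of `ℕ → X`
contain cylinders of a common length `K`. For `n ≥ K` the windows `[k n, k n + K)` with distinct
`k ∈ {0, m₁, …, m_N}` are disjoint, so one sequence can prescribe an initial segment of a point of
`U₀` on the window at `0` and one of a point of `Uᵢ` on the window at `mᵢ n`.
-/

open Filter Function PiNat Real Topology

def DisjointMixing {ι Z : Type*} [TopologicalSpace Z] (f : ι → Z → Z) : Prop :=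
  ∀ (U0 : Set Z) (U : ι → Set Z), IsOpen U0 → U0.Nonempty → (∀ i, IsOpen (U i)) →
    (∀ i, (U i).Nonempty) → ({n : ℕ | ∃ z ∈ U0, ∀ i, (f i)^[n] z ∈ U i}ᶜ : Set ℕ).Finite

theorem DisjointMixing.of_semiconj {ι W Z : Type*} [TopologicalSpace W] [TopologicalSpace Z]
    {g : ι → W → W} {f : ι → Z → Z} (hg : DisjointMixing g) {φ : W → Z} (hφ : Continuous φ)
    (hφs : Surjective φ) (h : ∀ i, Semiconj φ (g i) (f i)) : DisjointMixing f := by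
  intro U0 U hU0 hU0ne hU hUne
  refine (hg _ _ (hU0.preimage hφ) (hU0ne.preimage hφs) (fun i => (hU i).preimage hφ)
    (fun i => (hUne i).preimage hφs)).subset (Set.compl_subset_compl.mpr ?_)
  rintro n ⟨w, hw, hwU⟩
  exact ⟨φ w, hw, fun i => (h i).iterate_right n w ▸ hwU i⟩

section Shift

variable {X : Type*}

def shift (a : ℕ → X) : ℕ → X := fun j => a (j + 1)

theorem shift_iterate_apply (k : ℕ) (a : ℕ → X) (j : ℕ) : shift^[k] a j = a (j + k) := by
  induction k generalizing a with
  | zero => rfl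
  | succ k ih => rw [iterate_succ_apply, ih]; rfl

theorem eventually_cylinder_subset [TopologicalSpace X] {x : ℕ → X} {U : Set (ℕ → X)}
    (hU : U ∈ 𝓝 x) : ∀ᶠ K in atTop, cylinder x K ⊆ U := by
  rw [nhds_pi, mem_pi'] at hU
  obtain ⟨I, t, ht, hsub⟩ := hU
  filter_upwards [eventually_ge_atTop (I.sup (· + 1))] with K hK y hy
  refine hsub fun i hi => ?_
  have hiK : i < K := Nat.lt_of_succ_le ((Finset.le_sup (f := (· + 1)) hi).trans hK)
  change y i ∈ t i
  rw [hy i hiK]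
  exact mem_of_mem_nhds (ht i)

theorem exists_eq_on_of_pairwise_disjoint [Nonempty X] {ι α : Type*} {s : ι → Set α}
    (hs : Pairwise (Disjoint on s)) (y : ι → α → X) : ∃ b : α → X, ∀ k, ∀ j ∈ s k, b j = y k j := by
  classical
  refine ⟨fun j => if h : ∃ k, j ∈ s k then y h.choose j else Classical.arbitrary X,
    fun k j hj => ?_⟩
  have hex : ∃ k, j ∈ s k := ⟨k, hj⟩
  have hk : hex.choose = k := by
    by_contra hne
    exact Set.disjoint_left.mp (hs hne) hex.choose_spec hj
  simp only [dif_pos hex, hk]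

theorem pairwise_disjoint_Ico_mul {K n : ℕ} (hK : K ≤ n) :
    Pairwise (Disjoint on fun k : ℕ => Set.Ico (k * n) (k * n + K)) := by
  intro k l hkl
  wlog hlt : k < l generalizing k l
  · exact (this hkl.symm (hkl.lt_or_gt.resolve_left hlt)).symm
  have : (k + 1) * n ≤ l * n := Nat.mul_le_mul_right n hlt
  rw [Nat.succ_mul] at this
  simp only [onFun, Set.Ico_disjoint_Ico]
  omega

theorem eventually_exists_shift_iterate_mul_mem [TopologicalSpace X] [Nonempty X] {ι : Type*}
    [Finite ι] {c : ι → ℕ} (hc : Injective c) {V : ι → Set (ℕ → X)} (hV : ∀ k, IsOpen (V k))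
    (hVne : ∀ k, (V k).Nonempty) : ∀ᶠ n in atTop, ∃ b, ∀ k, shift^[c k * n] b ∈ V k := by
  choose x hx using hVne
  obtain ⟨K, hK⟩ := (eventually_all.mpr fun k => eventually_cylinder_subset
    ((hV k).mem_nhds (hx k))).exists
  filter_upwards [eventually_ge_atTop K] with n hn
  obtain ⟨b, hb⟩ := exists_eq_on_of_pairwise_disjoint
    ((pairwise_disjoint_Ico_mul hn).comp_of_injective hc) fun k j => x k (j - c k * n)
  refine ⟨b, fun k => hK k fun j hj => ?_⟩
  rw [shift_iterate_apply, hb k _ ⟨by omega, by omega⟩, Nat.add_sub_cancel]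

theorem disjointMixing_shift_iterate [TopologicalSpace X] [Nonempty X] {ι : Type*} [Finite ι]
    {m : ι → ℕ} (hpos : ∀ i, 0 < m i) (hinj : Injective m) :
    DisjointMixing fun i => (shift : (ℕ → X) → ℕ → X)^[m i] := by
  intro U0 U hU0 hU0ne hU hUne
  have hc : Injective fun o : Option ι => o.elim 0 m := by
    rintro (_ | i) (_ | j) h
    · rfl
    · exact absurd h.symm (hpos j).ne'
    · exact absurd h (hpos i).ne'
    · exact congrArg some (hinj h)
  have h := eventually_exists_shift_iterate_mul_mem hc (V := fun o => o.elim U0 U)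
    (by rintro (_ | i) <;> simp [hU0, hU]) (by rintro (_ | i) <;> simp [hU0ne, hUne])
  rw [← Nat.cofinite_eq_atTop] at h
  refine h.mono fun n ⟨b, hb⟩ => ⟨b, by simpa using hb none, fun i => ?_⟩
  rw [← iterate_mul]
  exact hb (some i)

end Shift

theorem ofDigits_eq_head_add_tail {b : ℕ} (d : ℕ → Fin b) :
    ofDigits d = ((d 0 : ℕ) + ofDigits fun i => d (i + 1)) / b := by
  rw [ofDigits_eq_sum_add_ofDigits d 1]
  simp only [Finset.range_one, ofDigitsTerm, Finset.sum_singleton, zero_add, pow_one]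
  ring

theorem semiconj_cantorSetHomeomorphNatToBool_symm_shift {σ : cantorSet → cantorSet}
    (hσ : ∀ t : cantorSet,
      ((t : ℝ) ≤ 1 / 3 → ((σ t : ℝ) = 3 * (t : ℝ))) ∧
      (2 / 3 ≤ (t : ℝ) → ((σ t : ℝ) = 3 * (t : ℝ) - 2))) :
    Semiconj cantorSetHomeomorphNatToBool.symm shift σ := by
  intro a
  set t := cantorSetHomeomorphNatToBool.symm a
  set s := cantorSetHomeomorphNatToBool.symm (shift a)
  have hs := cantorSet_subset_unitInterval s.2
  have ht : (t : ℝ) = ((if a 0 then 2 else 0) + s) / 3 := by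
    -- `cantorSetHomeomorphNatToBool.symm` is by definition the ternary expansion with digits `2a`.
    change ofDigits (fun i => cond (a i) (2 : Fin 3) 0) =
      (_ + ofDigits fun i => cond (shift a i) (2 : Fin 3) 0) / 3
    rw [ofDigits_eq_head_add_tail]
    cases a 0 <;> norm_num [shift]
  apply Subtype.ext
  cases h : a 0 <;> simp only [h, Bool.false_eq_true, if_false, if_true] at ht
  · rw [(hσ t).1 (by linarith [hs.2]), ht]
    ring
  · rw [(hσ t).2 (by linarith [hs.1]), ht]
    ring

/-- Let `σ` be the backward shift on the ternary Cantor set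
(`σ t = 3t` if `t ≤ 1/3`, `σ t = 3t - 2` if `t ≥ 2/3`).  Then for pairwise distinct
positive integers `m 1, …, m N`, the maps `σ^[m 1], …, σ^[m N]` are disjoint mixing:
every disjoint return set (for nonempty relatively open subsets of the Cantor set)
is cofinite in `ℕ`. -/
theorem stmt_9 (σ : cantorSet → cantorSet)
    (hσ : ∀ t : cantorSet,
      ((t : ℝ) ≤ 1 / 3 → ((σ t : ℝ) = 3 * (t : ℝ))) ∧
      (2 / 3 ≤ (t : ℝ) → ((σ t : ℝ) = 3 * (t : ℝ) - 2)))
    {N : ℕ} (m : Fin N → ℕ) (hpos : ∀ i, 0 < m i) (hinj : Function.Injective m) :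
    ∀ (U0 : Set cantorSet) (U : Fin N → Set cantorSet),
      IsOpen U0 → U0.Nonempty → (∀ i, IsOpen (U i)) → (∀ i, (U i).Nonempty) →
      ({n : ℕ | ∃ z ∈ U0, ∀ i, (σ^[m i])^[n] z ∈ U i}ᶜ : Set ℕ).Finite :=
  (disjointMixing_shift_iterate hpos hinj).of_semiconj cantorSetHomeomorphNatToBool.symm.continuous
    cantorSetHomeomorphNatToBool.symm.surjective
    fun i => (semiconj_cantorSetHomeomorphNatToBool_symm_shift hσ).iterate_right (m i)
end

section
/- Let (d_n)_{n≥1} be the sequence with d_n = 3^{-i} whenever 2^{i-1} ≤ n < 2^i (i ≥ 1), and let S be the unique continuous linear operator on the real Banach space ℓ¹ satisfying S e_1 = −3 Σ_{n≥1} d_n e_n and S e_n = 3 e_{⌊n/2⌋} for all n ≥ 2 (here (e_n) is the canonical basis of ℓ¹). Then for any pairwise distinct positive integers m_1,…,m_N, the operators S^{m_1},…,S^{m_N} are disjoint mixing on ℓ¹: for all nonempty open sets U_0,U_1,…,U_N ⊆ ℓ¹, the set { m ∈ ℕ : U_0 ∩ (S^{m_1})⁻ᵐ(U_1) ∩ …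 ∩ (S^{m_N})⁻ᵐ(U_N) ≠ ∅ } is cofinite in ℕ. -/
/-- The canonical unit vectors `eVec n` (for `n ≥ 1`) of the real Banach space
`ℓ¹ = ℓ¹(ℕ⁺, ℝ)` of absolutely summable real sequences. -/
noncomputable def eVec (n : ℕ+) : lp (fun _ : ℕ+ => ℝ) 1 := lp.single 1 n 1

/-!
Disjoint mixing follows from a Kitai-type criterion. Suppose a dense set of vectors `y` has
forward orbits `fᵏ y → 0` and backward orbits `u 0 = y`, `f (u (k+1)) = u k`, `u k → 0`. Given
such `x ∈ U₀` and `yᵢ ∈ Uᵢ`, put `zₙ = x + ∑ⱼ uⱼ (mⱼ n)`. Then `zₙ → x` and `f^(mᵢ n) zₙ → yᵢ`: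
the term `j = i` returns `yᵢ`, terms with `mⱼ > mᵢ` become `uⱼ ((mⱼ - mᵢ) n) → 0`, and terms with
`mⱼ < mᵢ` become `f^((mᵢ - mⱼ) n) yⱼ → 0`.

For `S`, each `eₙ` has the backward orbit `3⁻ᵏ e_{2ᵏ n}`. The vector `v = ∑ dₙ eₙ` is fixed by `S`
(coordinatewise, `-3 d₁ d_k + 3 d_{2k} + 3 d_{2k+1} = d_k`), and `S (dₙ eₙ) = d_{n/2} e_{n/2}`
carries every `dₙ eₙ` to `S (d₁ e₁) = -v` in finitely many steps. Hence `dₙ eₙ - d_p e_p` is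
eventually killed by the powers of `S`, and with `p = 2ʲ` these differences approximate `dₙ eₙ`.
-/

open Filter Topology

namespace Module.End

variable {R M : Type*} [Semiring R] [AddCommMonoid M] [Module R M] [TopologicalSpace M]
  [ContinuousAdd M] [ContinuousConstSMul R M]

def nullOrbits (f : Module.End R M) : Submodule R M where
  carrier := {x | Tendsto (fun k => (f ^ k) x) atTop (𝓝 0)}
  zero_mem' := by simp [tendsto_const_nhds]
  add_mem' {x y} hx hy := by simpa using hx.add hy
  smul_mem' c x hx := by simpa using hx.const_smul c

def nullBackwardOrbits (f : Module.End R M) : Submodule R M where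
  carrier := {y | ∃ u : ℕ → M, u 0 = y ∧ (∀ k, f (u (k + 1)) = u k) ∧ Tendsto u atTop (𝓝 0)}
  zero_mem' := ⟨0, rfl, by simp, tendsto_const_nhds⟩
  add_mem' := by
    rintro _ _ ⟨u, rfl, hu, hu0⟩ ⟨v, rfl, hv, hv0⟩
    exact ⟨fun k => u k + v k, rfl, by simp [hu, hv], by simpa using hu0.add hv0⟩
  smul_mem' := by
    rintro c _ ⟨u, rfl, hu, hu0⟩
    exact ⟨fun k => c • u k, rfl, by simp [hu], by simpa using hu0.const_smul c⟩

omit [TopologicalSpace M] [ContinuousAdd M] [ContinuousConstSMul R M] in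
theorem pow_apply_of_backward {f : Module.End R M} {u : ℕ → M} (hu : ∀ k, f (u (k + 1)) = u k)
    (j k : ℕ) : (f ^ j) (u (j + k)) = u k := by
  induction j with
  | zero => simp
  | succ j ih => rw [pow_succ, Module.End.mul_apply, Nat.add_right_comm, hu, ih]

theorem tendsto_pow_mul_apply_backward {f : Module.End R M} {u : ℕ → M}
    (hu : ∀ k, f (u (k + 1)) = u k) (hu0 : Tendsto u atTop (𝓝 0))
    (hfwd : u 0 ∈ f.nullOrbits) {a b : ℕ} (hab : a ≠ b) :
    Tendsto (fun n => (f ^ (a * n)) (u (b * n))) atTop (𝓝 0) := by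
  rcases hab.lt_or_gt with hlt | hgt
  · have hsplit : ∀ n, b * n = a * n + (b - a) * n := fun n => by
      rw [← add_mul, Nat.add_sub_cancel' hlt.le]
    simp_rw [hsplit, pow_apply_of_backward hu]
    exact hu0.comp (tendsto_id.const_mul_atTop' (Nat.sub_pos_of_lt hlt))
  · have hsplit : ∀ n, a * n = (a - b) * n + b * n := fun n => by
      rw [← add_mul, Nat.sub_add_cancel hgt.le]
    have hback : ∀ n, (f ^ (b * n)) (u (b * n)) = u 0 := fun n => pow_apply_of_backward hu _ 0
    simp_rw [hsplit, pow_add, Module.End.mul_apply, hback]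
    exact hfwd.comp (tendsto_id.const_mul_atTop' (Nat.sub_pos_of_lt hgt))

theorem finite_compl_disjoint_return_of_dense (f : Module.End R M)
    (hdense : Dense ((f.nullOrbits ⊓ f.nullBackwardOrbits : Submodule R M) : Set M))
    {N : ℕ} (m : Fin N → ℕ) (hpos : ∀ i, 0 < m i) (hinj : Function.Injective m)
    {U₀ : Set M} {U : Fin N → Set M} (hU₀ : IsOpen U₀) (hU₀ne : U₀.Nonempty)
    (hU : ∀ i, IsOpen (U i)) (hUne : ∀ i, (U i).Nonempty) :
    ({n : ℕ | ∃ z ∈ U₀, ∀ i, ((⇑f)^[m i])^[n] z ∈ U i}ᶜ : Set ℕ).Finite := by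
  obtain ⟨x, ⟨hx, -⟩, hxU⟩ := hdense.exists_mem_open hU₀ hU₀ne
  choose y hy hyU using fun i => hdense.exists_mem_open (hU i) (hUne i)
  choose u hu0 hu hulim using fun i => (hy i).2
  have hmul : ∀ i, Tendsto (fun n => m i * n) atTop atTop := fun i =>
    tendsto_id.const_mul_atTop' (hpos i)
  set z : ℕ → M := fun n => x + ∑ j, u j (m j * n)
  have hz : Tendsto z atTop (𝓝 x) := by
    simpa using tendsto_const_nhds.add
      (tendsto_finsetSum Finset.univ fun j _ => (hulim j).comp (hmul j))
  have hfz : ∀ i, Tendsto (fun n => (f ^ (m i * n)) (z n)) atTop (𝓝 (y i)) := by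
    intro i
    have hterm : ∀ j, Tendsto (fun n => (f ^ (m i * n)) (u j (m j * n))) atTop
        (𝓝 (if j = i then y i else 0)) := by
      intro j
      split_ifs with hji
      · subst hji
        have hback : ∀ n, (f ^ (m j * n)) (u j (m j * n)) = y j := fun n =>
          (pow_apply_of_backward (hu j) _ 0).trans (hu0 j)
        simpa only [hback] using tendsto_const_nhds
      · exact tendsto_pow_mul_apply_backward (hu j) (hulim j) (hu0 j ▸ (hy j).1)
          (hinj.ne (Ne.symm hji))
    simpa [z, map_sum] using
      (hx.comp (hmul i)).add (tendsto_finsetSum Finset.univ fun j _ => hterm j)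
  have hev : ∀ᶠ n in atTop, z n ∈ U₀ ∧ ∀ i, ((⇑f)^[m i])^[n] (z n) ∈ U i := by
    refine (hz.eventually_mem (hU₀.mem_nhds hxU)).and (eventually_all.2 fun i => ?_)
    simp only [← coe_pow, ← pow_mul]
    exact (hfz i).eventually_mem ((hU i).mem_nhds (hyU i))
  rw [← Nat.cofinite_eq_atTop] at hev
  exact hev.mono fun n hn => ⟨z n, hn⟩

end Module.End

local notation "ℓ¹" => lp (fun _ : ℕ+ => ℝ) 1

theorem smul_eVec (c : ℝ) (n : ℕ+) : c • eVec n = lp.single 1 n c := by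
  rw [eVec, ← lp.single_smul, smul_eq_mul, mul_one]

theorem norm_smul_eVec (c : ℝ) (n : ℕ+) : ‖c • eVec n‖ = |c| := by
  rw [smul_eVec, lp.norm_single one_pos, Real.norm_eq_abs]

theorem eVec_apply (n k : ℕ+) : eVec n k = if k = n then 1 else 0 := by
  simp [eVec, Pi.single_apply]

theorem hasSum_smul_eVec (x : ℓ¹) : HasSum (fun n => x n • eVec n) x := by
  simpa only [smul_eVec] using lp.hasSum_single ENNReal.one_ne_top x

theorem hasSum_smul_eVec_of_summable {a : ℕ+ → ℝ} (ha : Summable a) :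
    HasSum (fun n => a n • eVec n) (⟨a, memℓp_gen (by simpa using ha.abs)⟩ : ℓ¹) :=
  hasSum_smul_eVec _

theorem tsum_smul_eVec_apply {a : ℕ+ → ℝ} (ha : Summable a) (k : ℕ+) :
    (∑' n, a n • eVec n) k = a k :=
  congrArg (fun y : ℓ¹ => y k) (hasSum_smul_eVec_of_summable ha).tsum_eq

theorem dense_span_range_eVec : Dense (Submodule.span ℝ (Set.range eVec) : Set ℓ¹) := fun x =>
  mem_closure_of_tendsto (hasSum_smul_eVec x) (Eventually.of_forall fun _ =>
    Submodule.sum_mem _ fun n _ => Submodule.smul_mem _ _ (Submodule.subset_span ⟨n, rfl⟩))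

namespace DyadicShift

section Weights

variable {d : ℕ+ → ℝ}
  (hd : ∀ (i : ℕ) (n : ℕ+), 1 ≤ i → 2 ^ (i - 1) ≤ (n : ℕ) → (n : ℕ) < 2 ^ i →
    d n = ((3 : ℝ) ^ i)⁻¹)
include hd

theorem d_eq_inv_pow_log (n : ℕ+) : d n = ((3 : ℝ) ^ (Nat.log 2 n + 1))⁻¹ :=
  hd _ n le_add_self (Nat.pow_log_le_self 2 n.ne_zero) (Nat.lt_pow_succ_log_self one_lt_two _)

theorem d_ne_zero (n : ℕ+) : d n ≠ 0 := by
  rw [d_eq_inv_pow_log hd]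
  positivity

theorem d_one : d 1 = 3⁻¹ := by
  simp [d_eq_inv_pow_log hd]

theorem d_two_pow (j : ℕ) : d (2 ^ j) = ((3 : ℝ) ^ (j + 1))⁻¹ := by
  rw [d_eq_inv_pow_log hd, PNat.pow_coe, PNat.val_ofNat, Nat.log_pow one_lt_two]

theorem d_of_eq_div_two {n k : ℕ+} (hn : 2 ≤ (n : ℕ)) (hk : (k : ℕ) = n / 2) :
    d k = 3 * d n := by
  have hlog : Nat.log 2 k + 1 = Nat.log 2 n := by
    rw [hk, Nat.log_div_base]
    have := Nat.log_pos one_lt_two hn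
    omega
  rw [d_eq_inv_pow_log hd, d_eq_inv_pow_log hd, hlog, pow_succ, mul_inv, mul_comm, mul_assoc,
    inv_mul_cancel₀ three_ne_zero, mul_one]

theorem summable_d : Summable d := by
  set f : ℕ → ℝ := fun n => ((3 : ℝ) ^ (Nat.log 2 n + 1))⁻¹
  have hf : Summable f := by
    refine (summable_condensed_iff_of_nonneg (fun n => by positivity) fun m n _ hmn => ?_).1 ?_
    · exact inv_anti₀ (by positivity) (by gcongr; norm_num)
    · have hcond : (fun k : ℕ => (2 : ℝ) ^ k * f (2 ^ k)) = fun k => (2 / 3 : ℝ) ^ k * 3⁻¹ := by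
        ext k
        simp only [f, Nat.log_pow one_lt_two, div_pow, pow_succ]
        field_simp
      rw [hcond]
      exact (summable_geometric_of_lt_one (by norm_num) (by norm_num)).mul_right _
  simpa [Function.comp_def, f, ← d_eq_inv_pow_log hd] using hf.comp_injective PNat.coe_injective

end Weights

section Operator

variable {d : ℕ+ → ℝ}
  (hd : ∀ (i : ℕ) (n : ℕ+), 1 ≤ i → 2 ^ (i - 1) ≤ (n : ℕ) → (n : ℕ) < 2 ^ i →
    d n = ((3 : ℝ) ^ i)⁻¹)
  {S : ℓ¹ →L[ℝ] ℓ¹}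
  (hS1 : S (eVec 1) = (-3 : ℝ) • ∑' n : ℕ+, d n • eVec n)
  (hSn : ∀ n k : ℕ+, 2 ≤ (n : ℕ) → (k : ℕ) = (n : ℕ) / 2 → S (eVec n) = (3 : ℝ) • eVec k)

include hSn in
theorem apply_eVec_two_mul (n : ℕ+) : S (eVec (2 * n)) = (3 : ℝ) • eVec n :=
  hSn _ _ (by simp [PNat.mul_coe]; exact n.pos) (by simp [PNat.mul_coe])

include hSn in
theorem eVec_mem_nullBackwardOrbits (n : ℕ+) :
    eVec n ∈ Module.End.nullBackwardOrbits (S : ℓ¹ →ₗ[ℝ] ℓ¹) := by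
  refine ⟨fun k => ((3 : ℝ) ^ k)⁻¹ • eVec (2 ^ k * n), by simp, fun k => ?_, ?_⟩
  · simp only [ContinuousLinearMap.coe_coe, map_smul]
    rw [pow_succ' (2 : ℕ+), mul_assoc, apply_eVec_two_mul hSn, smul_smul]
    congr 1
    field_simp
    ring
  · rw [tendsto_zero_iff_norm_tendsto_zero]
    simpa [norm_smul_eVec, Function.comp_def] using tendsto_inv_atTop_zero.comp
      (tendsto_pow_atTop_atTop_of_one_lt (by norm_num : (1 : ℝ) < 3))

include hd hS1 hSn in
theorem apply_smul_eVec_apply (n k : ℕ+) :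
    S (d n • eVec n) k = (if n = 1 then -d k else 0) + (if n = 2 * k then d k else 0) +
      (if n = 2 * k + 1 then d k else 0) := by
  rcases eq_or_ne n 1 with rfl | hn
  · have h2k : (1 : ℕ+) ≠ 2 * k := by simp [← PNat.coe_inj]; omega
    have h2k1 : (1 : ℕ+) ≠ 2 * k + 1 := by simp [← PNat.coe_inj]
    simp [hS1, tsum_smul_eVec_apply (summable_d hd), d_one hd, h2k, h2k1]
  · have h2 : 2 ≤ (n : ℕ) := (PNat.coe_lt_coe 1 n).2 (one_le.lt_of_ne' hn)
    obtain ⟨h, hh⟩ : ∃ h : ℕ+, (h : ℕ) = n / 2 := ⟨⟨n / 2, by omega⟩, rfl⟩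
    have hdh := d_of_eq_div_two hd h2 hh
    rw [map_smul, hSn n h h2 hh, if_neg hn, zero_add]
    by_cases hk : k = h
    · subst hk
      simp only [lp.coeFn_smul, Pi.smul_apply, eVec_apply, if_pos, smul_eq_mul, ← PNat.coe_inj,
        PNat.mul_coe, PNat.add_coe, PNat.val_ofNat]
      split_ifs <;> first | omega | linarith
    · simp only [lp.coeFn_smul, Pi.smul_apply, eVec_apply, if_neg hk, smul_eq_mul, mul_zero]
      rw [← PNat.coe_inj, hh] at hk
      simp only [← PNat.coe_inj, PNat.mul_coe, PNat.add_coe, PNat.val_ofNat]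
      split_ifs <;> first | omega | simp

include hd hS1 hSn in
theorem apply_tsum_smul_eVec : S (∑' n, d n • eVec n) = ∑' n, d n • eVec n := by
  have hv := (hasSum_smul_eVec_of_summable (summable_d hd)).summable.hasSum
  ext k
  have hcoord : HasSum (fun n => S (d n • eVec n) k) (S (∑' n, d n • eVec n) k) :=
    (lp.evalCLM ℝ _ 1 k).hasSum (S.hasSum hv)
  rw [tsum_smul_eVec_apply (summable_d hd)]
  refine hcoord.unique ?_
  simp_rw [apply_smul_eVec_apply hd hS1 hSn]
  convert ((hasSum_ite_eq 1 (-d k)).add (hasSum_ite_eq (2 * k) (d k))).add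
    (hasSum_ite_eq (2 * k + 1) (d k)) using 1
  ring

include hd hS1 hSn in
theorem eventually_pow_apply_smul_eVec (n : ℕ+) :
    ∀ᶠ j in atTop, ((S : ℓ¹ →ₗ[ℝ] ℓ¹) ^ j) (d n • eVec n) = -∑' n, d n • eVec n := by
  induction n using PNat.strongInductionOn with
  | _ n ih =>
  rw [← map_add_atTop_eq_nat 1, eventually_map]
  simp only [pow_succ, Module.End.mul_apply, ContinuousLinearMap.coe_coe]
  rcases eq_or_ne n 1 with rfl | hn
  · have hfix : ∀ j, ((S : ℓ¹ →ₗ[ℝ] ℓ¹) ^ j) (∑' n, d n • eVec n) = ∑' n, d n • eVec n :=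
      fun j => by
        rw [Module.End.pow_apply]
        exact Function.iterate_fixed (apply_tsum_smul_eVec hd hS1 hSn) j
    refine Eventually.of_forall fun j => ?_
    rw [map_smul, hS1, smul_smul, d_one hd, show (3 : ℝ)⁻¹ * -3 = -1 by norm_num, neg_one_smul,
      map_neg, hfix]
  · have h2 : 2 ≤ (n : ℕ) := (PNat.coe_lt_coe 1 n).2 (one_le.lt_of_ne' hn)
    obtain ⟨h, hh⟩ : ∃ h : ℕ+, (h : ℕ) = n / 2 := ⟨⟨n / 2, by omega⟩, rfl⟩
    rw [map_smul, hSn n h h2 hh, smul_smul, mul_comm, ← d_of_eq_div_two hd h2 hh]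
    exact ih h (by rw [← PNat.coe_lt_coe, hh]; omega)

include hd hS1 hSn in
theorem smul_eVec_sub_smul_eVec_mem (n p : ℕ+) :
    d n • eVec n - d p • eVec p ∈ Module.End.nullOrbits (S : ℓ¹ →ₗ[ℝ] ℓ¹) ⊓
      Module.End.nullBackwardOrbits (S : ℓ¹ →ₗ[ℝ] ℓ¹) := by
  refine ⟨tendsto_const_nhds.congr' ?_, ?_⟩
  · filter_upwards [eventually_pow_apply_smul_eVec hd hS1 hSn n,
      eventually_pow_apply_smul_eVec hd hS1 hSn p] with j hn hp
    rw [map_sub, hn, hp, sub_self]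
  · exact sub_mem (Submodule.smul_mem _ _ (eVec_mem_nullBackwardOrbits hSn n))
      (Submodule.smul_mem _ _ (eVec_mem_nullBackwardOrbits hSn p))

include hd hS1 hSn in
theorem dense_nullOrbits_inf_nullBackwardOrbits :
    Dense ((Module.End.nullOrbits (S : ℓ¹ →ₗ[ℝ] ℓ¹) ⊓
      Module.End.nullBackwardOrbits (S : ℓ¹ →ₗ[ℝ] ℓ¹) : Submodule ℝ ℓ¹) : Set ℓ¹) := by
  set P := Module.End.nullOrbits (S : ℓ¹ →ₗ[ℝ] ℓ¹) ⊓
    Module.End.nullBackwardOrbits (S : ℓ¹ →ₗ[ℝ] ℓ¹)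
  have heVec : ∀ n, eVec n ∈ closure (P : Set ℓ¹) := by
    intro n
    have h0 : Tendsto (fun j => ((d n)⁻¹ * d (2 ^ j)) • eVec (2 ^ j)) atTop (𝓝 0) := by
      rw [tendsto_zero_iff_norm_tendsto_zero]
      simp only [norm_smul_eVec, abs_mul, d_two_pow hd, ← inv_pow, abs_pow, abs_inv,
        Nat.abs_ofNat]
      simpa using ((tendsto_pow_atTop_nhds_zero_of_lt_one (by norm_num : (0 : ℝ) ≤ 3⁻¹)
        (by norm_num)).comp (tendsto_add_atTop_nat 1)).const_mul |d n|⁻¹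
    have hlim : Tendsto (fun j => (d n)⁻¹ • (d n • eVec n - d (2 ^ j) • eVec (2 ^ j))) atTop
        (𝓝 (eVec n)) := by
      simpa [smul_sub, smul_smul, inv_mul_cancel₀ (d_ne_zero hd n)] using
        tendsto_const_nhds.sub h0
    exact mem_closure_of_tendsto hlim (Eventually.of_forall fun j =>
      P.smul_mem _ (smul_eVec_sub_smul_eVec_mem hd hS1 hSn n (2 ^ j)))
  have hspan : Submodule.span ℝ (Set.range eVec) ≤ P.topologicalClosure :=
    Submodule.span_le.2 (Set.range_subset_iff.2 fun n => by
      rw [SetLike.mem_coe, ← SetLike.mem_coe, Submodule.topologicalClosure_coe]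
      exact heVec n)
  rw [← dense_closure, ← Submodule.topologicalClosure_coe]
  exact dense_span_range_eVec.mono hspan

end Operator

end DyadicShift

/-- Let `(dₙ)` be the sequence with `dₙ = 3⁻ⁱ` whenever
`2^(i-1) ≤ n < 2^i` (`i ≥ 1`), and let `S` be the (unique) continuous linear operator
on `ℓ¹` with `S e₁ = −3 ∑ₙ dₙ eₙ` and `S eₙ = 3 e⌊n/2⌋` for `n ≥ 2`.  Then for
pairwise distinct positive integers `m 1, …, m N`, the operators `S^(m 1), …, S^(m N)`
are disjoint mixing on `ℓ¹`: every disjoint return set is cofinite in `ℕ`. -/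
theorem stmt_11 (d : ℕ+ → ℝ)
    (hd : ∀ (i : ℕ) (n : ℕ+), 1 ≤ i → 2 ^ (i - 1) ≤ (n : ℕ) → (n : ℕ) < 2 ^ i →
      d n = ((3 : ℝ) ^ i)⁻¹)
    (S : lp (fun _ : ℕ+ => ℝ) 1 →L[ℝ] lp (fun _ : ℕ+ => ℝ) 1)
    (hS1 : S (eVec 1) = (-3 : ℝ) • ∑' n : ℕ+, d n • eVec n)
    (hSn : ∀ n k : ℕ+, 2 ≤ (n : ℕ) → (k : ℕ) = (n : ℕ) / 2 →
      S (eVec n) = (3 : ℝ) • eVec k)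
    {N : ℕ} (m : Fin N → ℕ) (hpos : ∀ i, 0 < m i) (hinj : Function.Injective m) :
    ∀ (U0 : Set (lp (fun _ : ℕ+ => ℝ) 1)) (U : Fin N → Set (lp (fun _ : ℕ+ => ℝ) 1)),
      IsOpen U0 → U0.Nonempty → (∀ i, IsOpen (U i)) → (∀ i, (U i).Nonempty) →
      ({n : ℕ | ∃ z ∈ U0, ∀ i, ((⇑S)^[m i])^[n] z ∈ U i}ᶜ : Set ℕ).Finite :=
  fun _ _ hU0 hU0ne hU hUne => Module.End.finite_compl_disjoint_return_of_dense _
    (DyadicShift.dense_nullOrbits_inf_nullBackwardOrbits hd hS1 hSn) m hpos hinj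
    hU0 hU0ne hU hUne
end

section
/- Let (d_n)_{n≥1} be the sequence with d_n = 3^{-i} whenever 2^{i-1} ≤ n < 2^i (i ≥ 1), and let S be the unique continuous linear operator on the real Banach space ℓ¹ satisfying S e_1 = −3 Σ_{n≥1} d_n e_n and S e_n = 3 e_{⌊n/2⌋} for all n ≥ 2. Then the vector x := −3 Σ_{n≥1} d_n e_n (= S e_1) is a fixed point of S, i.e. S x = x. -/
theorem HasSum.pnat_halving {E : Type*} [AddCommGroup E] [TopologicalSpace E]
    [IsTopologicalAddGroup E] {f g : ℕ+ → E} {a : E} (hf : HasSum f a)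
    (h_even : ∀ k, g (2 * k) = f k) (h_odd : ∀ k, g (2 * k + 1) = f k) :
    HasSum g (g 1 + (a + a)) := by
  rw [← Equiv.pnatEquivNat.symm.hasSum_iff] at hf ⊢
  set G := g ∘ Equiv.pnatEquivNat.symm
  have h_even' : HasSum (fun m => G (2 * m + 1)) a := by
    convert hf using 2 with m
    exact h_even (Equiv.pnatEquivNat.symm m)
  have h_odd' : HasSum (fun m => G (2 * m + 1 + 1)) a := by
    convert hf using 2 with m
    exact h_odd (Equiv.pnatEquivNat.symm m)
  rw [← hasSum_nat_add_iff' 1, Finset.sum_range_one]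
  convert HasSum.even_add_odd (f := fun n => G (n + 1)) h_even' h_odd'
  exact add_sub_cancel_left (g 1) (a + a)

noncomputable def dyadicWeight (n : ℕ) : ℝ := ((3 : ℝ) ^ (Nat.log 2 n + 1))⁻¹

lemma dyadicWeight_nonneg (n : ℕ) : 0 ≤ dyadicWeight n := by
  unfold dyadicWeight; positivity

lemma dyadicWeight_antitone : Antitone dyadicWeight := fun _ _ hmn =>
  inv_anti₀ (by positivity) <|
    pow_le_pow_right₀ (by norm_num) (Nat.add_le_add_right (Nat.log_mono_right hmn) 1)

lemma dyadicWeight_two_pow (k : ℕ) : dyadicWeight (2 ^ k) = ((3 : ℝ) ^ (k + 1))⁻¹ := by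
  rw [dyadicWeight, Nat.log_pow one_lt_two]

lemma dyadicWeight_eq_div_two {n : ℕ} (hn : 2 ≤ n) :
    dyadicWeight n = dyadicWeight (n / 2) / 3 := by
  rw [dyadicWeight, dyadicWeight, Nat.log_of_one_lt_of_le one_lt_two hn, pow_succ, mul_inv,
    div_eq_mul_inv]

lemma summable_dyadicWeight : Summable dyadicWeight := by
  refine (summable_condensed_iff_of_nonneg dyadicWeight_nonneg
    fun _ _ _ hmn => dyadicWeight_antitone hmn).mp ?_
  have h : (fun k : ℕ => (2 : ℝ) ^ k * dyadicWeight (2 ^ k)) = fun k => 3⁻¹ * (2 / 3) ^ k := by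
    funext k
    rw [dyadicWeight_two_pow, pow_succ, div_pow]
    field_simp
  rw [h]
  exact (summable_geometric_of_lt_one (by norm_num) (by norm_num)).mul_left _

lemma eq_dyadicWeight {d : ℕ+ → ℝ}
    (hd : ∀ (i : ℕ) (n : ℕ+), 1 ≤ i → 2 ^ (i - 1) ≤ (n : ℕ) → (n : ℕ) < 2 ^ i →
      d n = ((3 : ℝ) ^ i)⁻¹) (n : ℕ+) : d n = dyadicWeight n :=
  hd _ n le_add_self (Nat.pow_log_le_self 2 n.ne_zero) (Nat.lt_pow_succ_log_self one_lt_two _)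

lemma norm_eVec (n : ℕ+) : ‖eVec n‖ = 1 := by
  rw [eVec, lp.norm_single one_pos, norm_one]

/-- Let `(dₙ)` be the sequence with `dₙ = 3⁻ⁱ` whenever
`2^(i-1) ≤ n < 2^i` (`i ≥ 1`), and let `S` be the (unique) continuous linear operator
on `ℓ¹` with `S e₁ = −3 ∑ₙ dₙ eₙ` and `S eₙ = 3 e⌊n/2⌋` for `n ≥ 2`.  Then the vector
`x := −3 ∑ₙ dₙ eₙ (= S e₁)` is a fixed point of `S`, i.e. `S x = x`. -/
theorem stmt_12 (d : ℕ+ → ℝ)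
    (hd : ∀ (i : ℕ) (n : ℕ+), 1 ≤ i → 2 ^ (i - 1) ≤ (n : ℕ) → (n : ℕ) < 2 ^ i →
      d n = ((3 : ℝ) ^ i)⁻¹)
    (S : lp (fun _ : ℕ+ => ℝ) 1 →L[ℝ] lp (fun _ : ℕ+ => ℝ) 1)
    (hS1 : S (eVec 1) = (-3 : ℝ) • ∑' n : ℕ+, d n • eVec n)
    (hSn : ∀ n k : ℕ+, 2 ≤ (n : ℕ) → (k : ℕ) = (n : ℕ) / 2 →
      S (eVec n) = (3 : ℝ) • eVec k) :
    S ((-3 : ℝ) • ∑' n : ℕ+, d n • eVec n) = (-3 : ℝ) • ∑' n : ℕ+, d n • eVec n := by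
  have hd' : ∀ n, d n = dyadicWeight n := eq_dyadicWeight hd
  set f : ℕ+ → lp (fun _ : ℕ+ => ℝ) 1 := fun n => d n • eVec n
  set t := ∑' n, f n
  have hf : HasSum f t := by
    refine (Summable.of_norm ?_).hasSum
    refine (summable_dyadicWeight.comp_injective PNat.coe_injective).congr fun n => ?_
    rw [norm_smul, norm_eVec, mul_one, Real.norm_of_nonneg (hd' n ▸ dyadicWeight_nonneg n), hd',
      Function.comp_apply]
  have hSf : ∀ n k : ℕ+, 2 ≤ (n : ℕ) → (k : ℕ) = n / 2 → S (f n) = f k := by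
    intro n k hn hk
    change S (d n • eVec n) = d k • eVec k
    rw [map_smul, hSn n k hn hk, smul_smul, hd', hd', dyadicWeight_eq_div_two hn, ← hk,
      div_mul_cancel₀ _ three_ne_zero]
  have hSf1 : S (f 1) = -t := by
    rw [map_smul, hS1, smul_smul, hd', dyadicWeight, PNat.one_coe, Nat.log_one_right]
    norm_num
  have hSt : HasSum (fun n => S (f n)) (-t + (t + t)) :=
    hSf1 ▸ hf.pnat_halving (fun k => hSf (2 * k) k (by have := k.pos; simp; omega) (by simp))
      (fun k => hSf (2 * k + 1) k (by have := k.pos; simp; omega) (by simp; omega))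
  rw [map_smul, (hf.mapL S).unique hSt, neg_add_cancel_left]
end
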